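/- For real a, b and real β > 0, ∫₀^∞ (cos(a x) − cos(b x))/(x · sinh(β x)) dx = ln cosh(b π/(2β)) − ln cosh(a π/(2β)). -/

import Mathlib

/-!
Expand `1 / sinh (β x) = 2 ∑ₙ exp (-(2n+1) β x)` and integrate termwise: the integrand is `O(x)`
at the origin, so the terms are dominated by `x exp (-(2n+1) β x)`, of integral `O(1 / (2n+1)²)`.
Each term is a Frullani-type integral: writing `(cos (a x) - cos (b x)) / x = ∫_a^b sin (t x) dt`
and integrating `exp (-c x) sin (t x) = Im exp ((-c + i t) x)` first gives
`(log (1 + (b/c)²) - log (1 + (a/c)²)) / 2`. The resulting series of logarithms is the logarithm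
of the product `cosh (π t) = ∏ₖ (1 + (2t / (2k+1))²)`, the quotient of Euler's sine products for
`sin (2π i t)` and `sin (π i t)`.
-/

open Real MeasureTheory Set Filter Topology Finset Function

lemma abs_cos_mul_sub_cos_mul_div_le (a b : ℝ) {x : ℝ} (hx : 0 ≤ x) :
    |(cos (a * x) - cos (b * x)) / x| ≤ (a ^ 2 + b ^ 2) / 2 * x := by
  have ha := one_sub_sq_div_two_le_cos (x := a * x)
  have hb := one_sub_sq_div_two_le_cos (x := b * x)
  rw [abs_div, abs_of_nonneg hx]
  refine div_le_of_le_mul₀ hx (by positivity) (abs_le.mpr ⟨?_, ?_⟩) <;>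
    nlinarith [cos_le_one (a * x), cos_le_one (b * x)]

lemma integral_mul_exp_neg_mul_Ioi {c : ℝ} (hc : 0 < c) :
    ∫ x in Ioi 0, x * exp (-(c * x)) = (c ^ 2)⁻¹ := by
  have h := integral_rpow_mul_exp_neg_mul_Ioi two_pos hc
  norm_num [Real.Gamma_two] at h
  exact h

lemma integrableOn_mul_exp_neg_mul_Ioi {c : ℝ} (hc : 0 < c) :
    IntegrableOn (fun x => x * exp (-(c * x))) (Ioi 0) :=
  -- a non-integrable function has Bochner integral `0`
  Integrable.of_integral_ne_zero (by rw [integral_mul_exp_neg_mul_Ioi hc]; positivity)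

lemma integral_exp_neg_mul_mul_sin {c : ℝ} (hc : 0 < c) (t : ℝ) :
    ∫ x in Ioi 0, exp (-(c * x)) * sin (t * x) = t / (c ^ 2 + t ^ 2) := by
  have hre : (-c + t * Complex.I).re < 0 := by simpa using hc
  have h_im : ∀ x : ℝ, exp (-(c * x)) * sin (t * x) =
      (Complex.exp ((-c + t * Complex.I) * x)).im := fun x => by
    simp [Complex.exp_im]
  have h := integral_im (integrableOn_exp_mul_complex_Ioi hre 0)
  simp only [RCLike.im_to_complex] at h
  simp_rw [h_im, h, integral_exp_mul_complex_Ioi hre 0]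
  simp [Complex.normSq_apply, sq, neg_div]

lemma integral_sin_mul_eq_cos_sub_cos_div {x : ℝ} (hx : x ≠ 0) (a b : ℝ) :
    ∫ t in a..b, sin (t * x) = (cos (a * x) - cos (b * x)) / x := by
  rw [intervalIntegral.integral_comp_mul_right sin hx, integral_sin, smul_eq_mul, inv_mul_eq_div]

lemma integral_exp_neg_mul_mul_cos_sub_cos_div {c : ℝ} (hc : 0 < c) (a b : ℝ) :
    ∫ x in Ioi 0, exp (-(c * x)) * ((cos (a * x) - cos (b * x)) / x) =
      (log (1 + (b / c) ^ 2) - log (1 + (a / c) ^ 2)) / 2 := by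
  have h_fubini : Integrable (uncurry fun t x => exp (-(c * x)) * sin (t * x))
      ((volume.restrict (uIoc a b)).prod (volume.restrict (Ioi (0 : ℝ)))) := by
    have : IsFiniteMeasure (volume.restrict (uIoc a b)) := Real.isFiniteMeasure_restrict_Ioc _ _
    refine ((integrable_const (1 : ℝ)).mul_prod (exp_neg_integrableOn_Ioi 0 hc)).mono'
      (by fun_prop) (ae_of_all _ fun ⟨t, x⟩ => ?_)
    simpa [abs_mul] using mul_le_mul_of_nonneg_left (abs_sin_le_one (t * x)) (exp_pos (-(c * x))).le
  have h_deriv : ∀ t ∈ uIcc a b, HasDerivAt (fun t => log (1 + (t / c) ^ 2) / 2)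
      (t / (c ^ 2 + t ^ 2)) t := by
    intro t _
    have h_sq : HasDerivAt (fun t : ℝ => 1 + (t / c) ^ 2) (2 * (t / c) * (1 / c)) t := by
      simpa using (((hasDerivAt_id t).div_const c).pow 2).const_add 1
    refine ((h_sq.log (by positivity)).div_const 2).congr_deriv ?_
    field_simp
  calc ∫ x in Ioi 0, exp (-(c * x)) * ((cos (a * x) - cos (b * x)) / x)
      = ∫ x in Ioi 0, ∫ t in a..b, exp (-(c * x)) * sin (t * x) := by
        refine setIntegral_congr_fun measurableSet_Ioi fun x hx => ?_
        rw [intervalIntegral.integral_const_mul, integral_sin_mul_eq_cos_sub_cos_div hx.ne']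
    _ = ∫ t in a..b, ∫ x in Ioi 0, exp (-(c * x)) * sin (t * x) :=
        (intervalIntegral_integral_swap h_fubini).symm
    _ = ∫ t in a..b, t / (c ^ 2 + t ^ 2) := by
        simp_rw [integral_exp_neg_mul_mul_sin hc]
    _ = (log (1 + (b / c) ^ 2) - log (1 + (a / c) ^ 2)) / 2 := by
        rw [intervalIntegral.integral_eq_sub_of_hasDerivAt h_deriv
          (by apply Continuous.intervalIntegrable; fun_prop (disch := intro t; positivity))]
        ring

lemma hasSum_two_mul_exp_neg_odd_mul {y : ℝ} (hy : 0 < y) :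
    HasSum (fun n : ℕ => 2 * exp (-((2 * n + 1) * y))) (sinh y)⁻¹ := by
  have h_ratio : exp (-(2 * y)) < 1 := exp_lt_one_iff.mpr (by linarith)
  have h_geom := (hasSum_geometric_of_lt_one (exp_pos _).le h_ratio).mul_left (2 * exp (-y))
  have h_sum : 2 * exp (-y) * (1 - exp (-(2 * y)))⁻¹ = (sinh y)⁻¹ := by
    rw [sinh_eq, show -(2 * y) = -y + -y by ring, exp_add, exp_neg]
    field_simp
  rw [← h_sum]
  refine h_geom.congr_fun fun n => ?_
  rw [← exp_nat_mul, mul_assoc, ← exp_add]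
  ring_nf

lemma summable_inv_two_mul_add_one_sq : Summable fun n : ℕ => ((2 * n + 1 : ℝ) ^ 2)⁻¹ := by
  refine ((summable_nat_add_iff 1).mpr (Real.summable_nat_pow_inv.mpr one_lt_two)).of_nonneg_of_le
    (fun n => by positivity) fun n => ?_
  push_cast
  gcongr
  linarith

lemma hasSum_integral_div_sinh {β K : ℝ} (hβ : 0 < β) {g : ℝ → ℝ}
    (hg : AEStronglyMeasurable g (volume.restrict (Ioi 0)))
    (hgK : ∀ x ∈ Ioi (0 : ℝ), |g x| ≤ K * x) :
    HasSum (fun n : ℕ => 2 * ∫ x in Ioi 0, exp (-((2 * n + 1) * β * x)) * g x)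
      (∫ x in Ioi 0, g x / sinh (β * x)) := by
  set c : ℕ → ℝ := fun n => (2 * n + 1) * β
  have hc : ∀ n, 0 < c n := fun n => by positivity
  set F : ℕ → ℝ → ℝ := fun n x => 2 * (exp (-(c n * x)) * g x)
  have hF_le : ∀ n, ∀ᵐ x ∂volume.restrict (Ioi 0),
      ‖F n x‖ ≤ 2 * K * (x * exp (-(c n * x))) := by
    intro n
    filter_upwards [ae_restrict_mem measurableSet_Ioi] with x hx
    have h_exp := exp_pos (-(c n * x))
    rw [Real.norm_eq_abs, abs_mul, abs_mul, abs_two, abs_of_pos h_exp]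
    nlinarith [hgK x hx]
  have h_major : ∀ n, IntegrableOn (fun x => 2 * K * (x * exp (-(c n * x)))) (Ioi 0) := fun n =>
    (integrableOn_mul_exp_neg_mul_Ioi (hc n)).const_mul _
  have hF_int : ∀ n, IntegrableOn (F n) (Ioi 0) := fun n => by
    have h_exp : Continuous fun x => exp (-(c n * x)) := by fun_prop
    exact (h_major n).mono' ((h_exp.aestronglyMeasurable.mul hg).const_mul 2) (hF_le n)
  have hF_sum : Summable fun n => ∫ x in Ioi 0, ‖F n x‖ := by
    refine (summable_inv_two_mul_add_one_sq.mul_left (2 * K / β ^ 2)).of_nonneg_of_le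
      (fun n => integral_nonneg fun x => norm_nonneg _) fun n => ?_
    calc ∫ x in Ioi 0, ‖F n x‖ ≤ ∫ x in Ioi 0, 2 * K * (x * exp (-(c n * x))) :=
          integral_mono_ae (hF_int n).norm (h_major n) (hF_le n)
      _ = 2 * K / β ^ 2 * ((2 * n + 1 : ℝ) ^ 2)⁻¹ := by
          rw [integral_const_mul, integral_mul_exp_neg_mul_Ioi (hc n)]
          simp only [c]
          field_simp
  have h_pt : ∀ x ∈ Ioi (0 : ℝ), g x / sinh (β * x) = ∑' n, F n x := fun x hx => by
    rw [div_eq_inv_mul,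
      ← ((hasSum_two_mul_exp_neg_odd_mul (mul_pos hβ hx)).mul_right (g x)).tsum_eq]
    exact tsum_congr fun n => by simp only [F, c]; ring_nf
  rw [setIntegral_congr_fun measurableSet_Ioi h_pt]
  exact (hasSum_integral_of_summable_integral_norm hF_int hF_sum).congr_fun fun n =>
    (integral_const_mul _ _).symm

lemma tendsto_euler_sinh_prod (t : ℝ) :
    Tendsto (fun n : ℕ => π * t * ∏ j ∈ range n, (1 + (t / (j + 1)) ^ 2))
      atTop (𝓝 (sinh (π * t))) := by
  have h := (Complex.continuous_im.tendsto _).comp (Complex.tendsto_euler_sin_prod (t * Complex.I))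
  have h_lim : (Complex.sin (π * (t * Complex.I))).im = sinh (π * t) := by
    rw [← mul_assoc, ← Complex.ofReal_mul, Complex.sin_mul_I, Complex.mul_I_im,
      ← Complex.ofReal_sinh, Complex.ofReal_re]
  rw [h_lim] at h
  refine h.congr fun n => ?_
  have h_prod : ∏ j ∈ range n, (1 - (t * Complex.I) ^ 2 / ((j : ℂ) + 1) ^ 2) =
      ((∏ j ∈ range n, (1 + (t / (j + 1)) ^ 2) : ℝ) : ℂ) := by
    push_cast
    refine prod_congr rfl fun j _ => ?_
    rw [mul_pow, Complex.I_sq, div_pow]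
    ring
  rw [comp_apply, h_prod, ← mul_assoc, mul_right_comm, ← Complex.ofReal_mul,
    ← Complex.ofReal_mul, Complex.mul_I_im, Complex.ofReal_re]

lemma prod_range_two_mul {M : Type*} [CommMonoid M] (f : ℕ → M) (n : ℕ) :
    ∏ i ∈ range (2 * n), f i = ∏ i ∈ range n, (f (2 * i) * f (2 * i + 1)) := by
  induction n with
  | zero => simp
  | succ n ih => rw [mul_add_one, prod_range_succ, prod_range_succ, prod_range_succ, ih, mul_assoc]

lemma tendsto_euler_cosh_prod (t : ℝ) :
    Tendsto (fun n : ℕ => ∏ k ∈ range n, (1 + (2 * t / (2 * k + 1)) ^ 2))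
      atTop (𝓝 (cosh (π * t))) := by
  rcases eq_or_ne t 0 with rfl | ht
  · simp
  have h_sinh : sinh (π * t) ≠ 0 := sinh_ne_zero.mpr (mul_ne_zero pi_ne_zero ht)
  have h_double := (tendsto_euler_sinh_prod (2 * t)).comp
    (tendsto_id.const_mul_atTop' two_pos : Tendsto (fun n : ℕ => 2 * n) atTop atTop)
  have h_ratio := (h_double.div (tendsto_euler_sinh_prod t) h_sinh).div_const 2
  have h_lim : sinh (π * (2 * t)) / sinh (π * t) / 2 = cosh (π * t) := by
    rw [mul_left_comm, sinh_two_mul]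
    field_simp
  rw [← h_lim]
  refine h_ratio.congr fun n => ?_
  have h_even : ∀ k : ℕ, 2 * t / (((2 * k + 1 : ℕ) : ℝ) + 1) = t / (k + 1) := fun k => by
    push_cast
    rw [show (2 * k + 1 + 1 : ℝ) = 2 * (k + 1) by ring, mul_div_mul_left _ _ two_ne_zero]
  have h_pos : 0 < ∏ j ∈ range n, (1 + (t / (j + 1)) ^ 2) := prod_pos fun j _ => by positivity
  simp only [comp_apply, Pi.div_apply]
  rw [prod_range_two_mul, prod_mul_distrib]
  simp only [h_even]
  push_cast
  field_simp

lemma hasSum_log_one_add_sq_div_odd (t : ℝ) :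
    HasSum (fun k : ℕ => log (1 + (2 * t / (2 * k + 1)) ^ 2)) (log (cosh (π * t))) := by
  rw [hasSum_iff_tendsto_nat_of_nonneg fun k => log_nonneg (le_add_of_nonneg_right (sq_nonneg _))]
  refine ((continuousAt_log (cosh_pos _).ne').tendsto.comp (tendsto_euler_cosh_prod t)).congr
    fun n => ?_
  rw [comp_apply, log_prod fun k _ => by positivity]

lemma hasSum_log_one_add_sq_div_odd_mul {β : ℝ} (hβ : β ≠ 0) (s : ℝ) :
    HasSum (fun n : ℕ => log (1 + (s / ((2 * n + 1) * β)) ^ 2))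
      (log (cosh (s * π / (2 * β)))) := by
  convert hasSum_log_one_add_sq_div_odd (s / (2 * β)) using 1
  · ext n
    field_simp
  · ring_nf

theorem stmt_10 (a b β : ℝ) (hβ : 0 < β) :
    ∫ x in Set.Ioi (0:ℝ), (Real.cos (a * x) - Real.cos (b * x)) / (x * Real.sinh (β * x)) =
      Real.log (Real.cosh (b * π / (2 * β))) - Real.log (Real.cosh (a * π / (2 * β))) := by
  have h_series := hasSum_integral_div_sinh hβ (K := (a ^ 2 + b ^ 2) / 2)
    (g := fun x => (cos (a * x) - cos (b * x)) / x)
    (by fun_prop : Measurable _).aestronglyMeasurable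
    fun x hx => abs_cos_mul_sub_cos_mul_div_le a b hx.le
  simp only [div_div] at h_series
  refine h_series.unique <| ((hasSum_log_one_add_sq_div_odd_mul hβ.ne' b).sub
    (hasSum_log_one_add_sq_div_odd_mul hβ.ne' a)).congr_fun fun n => ?_
  rw [integral_exp_neg_mul_mul_cos_sub_cos_div (by positivity)]
  ring
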